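/- arXiv:2010.12845 — 7 statements merged into one kernel-verified Lean document; each statement's English description precedes it below -/
import Mathlib

section
/- Let D be a division ring and n a positive integer. The assignments V ↦ I_V and I ↦ V_I are mutually inverse bijections between the right D-vector subspaces of D^n and the right ideals of M_n(D); that is, for every right subspace V of D^n one has V_{I_V} = V, and for every right ideal I of M_n(D) one has I_{V_I} = I. -/
open MulOpposite

variable {D : Type*} [DivisionRing D] {n : ℕ}

/-- The right ideal of matrices all of whose columns lie in the right subspace `V`. -/
def colIdeal (V : Submodule Dᵐᵒᵖ (Fin n → D)) :
    Submodule (Matrix (Fin n) (Fin n) D)ᵐᵒᵖ (Matrix (Fin n) (Fin n) D) where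
  carrier := {M | ∀ j, (fun i => M i j) ∈ V}
  add_mem' := by
    intro M N hM hN j
    have : (fun i => (M + N) i j) = (fun i => M i j) + fun i => N i j := by
      funext i; simp [Matrix.add_apply]
    rw [this]
    exact V.add_mem (hM j) (hN j)
  zero_mem' := by
    intro j
    have : (fun i => (0 : Matrix (Fin n) (Fin n) D) i j) = (0 : Fin n → D) := by
      funext i; simp
    rw [this]; exact V.zero_mem
  smul_mem' := by
    intro N M hM j
    have h : (fun i => (op N.unop • M) i j)
        = ∑ k, op (N.unop k j) • fun i => M i k := by
      funext i
      simp [MulOpposite.smul_eq_mul_unop, Matrix.mul_apply, Finset.sum_apply]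
    have : op N.unop • M = N • M := by simp
    rw [← this, h]
    exact Submodule.sum_mem V fun k _ => V.smul_mem _ (hM k)

/-- The right subspace of `D^n` spanned by the columns of elements of a right ideal `I`. -/
def colSpan (I : Submodule (Matrix (Fin n) (Fin n) D)ᵐᵒᵖ (Matrix (Fin n) (Fin n) D)) :
    Submodule Dᵐᵒᵖ (Fin n → D) :=
  Submodule.span Dᵐᵒᵖ {v | ∃ M ∈ I, ∃ j : Fin n, v = fun i => M i j}

/-!
`colSpan` is left adjoint to `colIdeal`, so only `V ≤ V_{I_V}` and `I_{V_I} ≤ I` need proof.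
Right multiplication by the matrix unit `E_{j₀ j}` moves column `j₀` of a matrix to position `j`
and kills the others, so a right ideal `I` contains every matrix with a single nonzero column taken
from `V_I`; since every matrix is the sum of its columns, this gives `I_{V_I} ≤ I`.
-/

namespace Matrix

variable {l m α : Type*} [DecidableEq m]

lemma updateCol_add [Add α] (A B : Matrix l m α) (j : m) (x y : l → α) :
    (A + B).updateCol j (x + y) = A.updateCol j x + B.updateCol j y := by
  ext i k
  by_cases hk : k = j
  · subst hk; simp
  · simp [updateCol_ne hk]

lemma col_updateCol_self (A : Matrix l m α) (j : m) (c : l → α) :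
    (A.updateCol j c).col j = c := by
  ext i; simp

lemma sum_updateCol_zero_col [Fintype m] [AddCommMonoid α] (M : Matrix l m α) :
    ∑ j, updateCol 0 j (M.col j) = M := by
  ext i k
  simp [sum_apply, updateCol_apply]

end Matrix

open Matrix

theorem gc_colSpan_colIdeal : GaloisConnection (colSpan (D := D) (n := n)) colIdeal := by
  intro I V
  rw [colSpan, Submodule.span_le]
  constructor
  · intro h M hM j
    exact h ⟨M, hM, j, rfl⟩
  · rintro h v ⟨M, hM, j, rfl⟩
    exact h hM j

lemma updateCol_zero_mem_colIdeal {V : Submodule Dᵐᵒᵖ (Fin n → D)} {v : Fin n → D} (hv : v ∈ V)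
    (j : Fin n) : updateCol 0 j v ∈ colIdeal V := by
  intro k
  by_cases hk : k = j
  · subst hk; simpa using hv
  · simp [updateCol_ne hk, ← Pi.zero_def]

lemma le_colSpan_colIdeal (V : Submodule Dᵐᵒᵖ (Fin n → D)) : V ≤ colSpan (colIdeal V) := by
  intro v hv
  rcases isEmpty_or_nonempty (Fin n) with _ | ⟨⟨j⟩⟩
  · simp [Subsingleton.elim v 0]
  · refine Submodule.subset_span ⟨updateCol 0 j v, updateCol_zero_mem_colIdeal hv j, j, ?_⟩
    ext i; simp

lemma updateCol_zero_mem_of_mem_colSpan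
    {I : Submodule (Matrix (Fin n) (Fin n) D)ᵐᵒᵖ (Matrix (Fin n) (Fin n) D)} {v : Fin n → D}
    (hv : v ∈ colSpan I) (j : Fin n) : updateCol 0 j v ∈ I := by
  have mul_mem {M : Matrix (Fin n) (Fin n) D} (hM : M ∈ I) (N) : M * N ∈ I :=
    I.smul_mem (op N) hM
  induction hv using Submodule.span_induction with
  | mem x hx =>
    obtain ⟨M, hM, j₀, rfl⟩ := hx
    have := mul_mem hM (single j₀ j 1)
    rwa [mul_single_eq_updateCol_zero, op_one, one_smul] at this
  | zero => simpa only [updateCol_zero_zero] using I.zero_mem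
  | add x y _ _ hx hy => simpa only [← updateCol_add, add_zero] using I.add_mem hx hy
  | smul c x _ hx =>
    have := mul_mem hx (single j j c.unop)
    rwa [mul_single_eq_updateCol_zero, op_unop, col_updateCol_self] at this

lemma colIdeal_colSpan_le (I : Submodule (Matrix (Fin n) (Fin n) D)ᵐᵒᵖ (Matrix (Fin n) (Fin n) D)) :
    colIdeal (colSpan I) ≤ I := by
  intro M hM
  rw [← sum_updateCol_zero_col M]
  exact I.sum_mem fun j _ => updateCol_zero_mem_of_mem_colSpan (hM j) j

theorem colSpan_colIdeal_and_colIdeal_colSpan_general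
    {D : Type*} [DivisionRing D] {n : ℕ} :
    (∀ V : Submodule Dᵐᵒᵖ (Fin n → D), colSpan (colIdeal V) = V) ∧
    (∀ I : Submodule (Matrix (Fin n) (Fin n) D)ᵐᵒᵖ (Matrix (Fin n) (Fin n) D),
      colIdeal (colSpan I) = I) :=
  ⟨fun V => (gc_colSpan_colIdeal.l_u_le V).antisymm (le_colSpan_colIdeal V),
    fun I => (colIdeal_colSpan_le I).antisymm (gc_colSpan_colIdeal.le_u_l I)⟩

/-- For a division ring `D` and `n ≥ 1`, the assignments `V ↦ I_V` and
`I ↦ V_I` are mutually inverse bijections between right subspaces of `D^n` and right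
ideals of `M_n(D)`. -/
theorem colSpan_colIdeal_and_colIdeal_colSpan
    {D : Type*} [DivisionRing D] {n : ℕ} (hn : 1 ≤ n) :
    (∀ V : Submodule Dᵐᵒᵖ (Fin n → D), colSpan (colIdeal V) = V) ∧
    (∀ I : Submodule (Matrix (Fin n) (Fin n) D)ᵐᵒᵖ (Matrix (Fin n) (Fin n) D),
      colIdeal (colSpan I) = I) :=
  colSpan_colIdeal_and_colIdeal_colSpan_general
end

section
/- Let D be a division ring, n a positive integer, and I a right ideal of M_n(D). Then there exists an idempotent element φ ∈ I (φ² = φ) such that I is the right ideal generated by φ, i.e. I = φ·M_n(D), and such that V_I equals the image of φ, i.e. V_I is the right subspace of D^n spanned by the columns of φ. -/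
open MulOpposite

variable {D : Type*} [DivisionRing D] {n : ℕ}

/-! Let `W` be a complement of `V_I` and `φ` the matrix of the projection onto `V_I` along `W`.
Every matrix whose columns lie in `V_I` belongs to `I`: by span induction it suffices to treat
the rank-one matrices `v wᵀ` with `v` a column `M e_j` of some `M ∈ I`, and `v wᵀ = M (e_j wᵀ)`.
So `φ ∈ I`; `φ M = M` for `M ∈ I` because `φ` fixes the columns of `M`; and the columns of `φ`
span the image of the projection, which is `V_I`. -/

open Matrix

theorem Submodule.mul_mem_of_mem_op {A : Type*} [Semiring A] {I : Submodule Aᵐᵒᵖ A} {a : A}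
    (ha : a ∈ I) (b : A) : a * b ∈ I :=
  I.smul_mem (op b) ha

theorem Matrix.col_mul {R m : Type*} [Semiring R] [Fintype m] (A B : Matrix m m R) (j : m) :
    (A * B).col j = A *ᵥ B.col j :=
  rfl

section RightLinear

variable {R m : Type*} [Semiring R] [Fintype m] [DecidableEq m]

theorem sum_op_smul_single_one (v : m → R) : ∑ k, op (v k) • Pi.single k (1 : R) = v := by
  ext i
  simp [Finset.sum_apply, Pi.single_apply]

theorem span_range_single_one :
    Submodule.span Rᵐᵒᵖ (Set.range fun k : m => Pi.single k (1 : R)) = ⊤ :=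
  eq_top_iff.2 fun v _ => sum_op_smul_single_one v ▸
    Submodule.sum_mem _ fun k _ => Submodule.smul_mem _ _ (Submodule.subset_span ⟨k, rfl⟩)

theorem LinearMap.span_range_apply_single_one {N : Type*} [AddCommMonoid N] [Module Rᵐᵒᵖ N]
    (f : (m → R) →ₗ[Rᵐᵒᵖ] N) :
    Submodule.span Rᵐᵒᵖ (Set.range fun k => f (Pi.single k 1)) = LinearMap.range f := by
  rw [LinearMap.range_eq_map, ← span_range_single_one, Submodule.map_span, ← Set.range_comp]
  rfl

/-- Over a noncommutative `R`, a matrix acts on columns linearly for the right `R`-module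
structure, so its linear maps are the `Rᵐᵒᵖ`-linear ones; `LinearMap.toMatrix'` does not apply. -/
def LinearMap.toMulVecMatrix (f : (m → R) →ₗ[Rᵐᵒᵖ] (m → R)) : Matrix m m R :=
  of fun i j => f (Pi.single j 1) i

theorem LinearMap.toMulVecMatrix_mulVec (f : (m → R) →ₗ[Rᵐᵒᵖ] (m → R)) (v : m → R) :
    f.toMulVecMatrix *ᵥ v = f v := by
  conv_rhs => rw [← sum_op_smul_single_one v]
  rw [mulVec_eq_sum, map_sum]
  simp only [map_smul]
  rfl

theorem Matrix.sum_vecMulVec_col_single_one (M : Matrix m m R) :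
    ∑ j, vecMulVec (M.col j) (Pi.single j 1) = M := by
  ext i k
  simp [Matrix.sum_apply, vecMulVec_apply, Pi.single_apply]

end RightLinear

theorem vecMulVec_mem_of_mem_colSpan
    {I : Submodule (Matrix (Fin n) (Fin n) D)ᵐᵒᵖ (Matrix (Fin n) (Fin n) D)} {v : Fin n → D}
    (hv : v ∈ colSpan I) (w : Fin n → D) :
    vecMulVec v w ∈ I := by
  induction hv using Submodule.span_induction generalizing w with
  | mem v hv =>
    obtain ⟨M, hM, j, rfl⟩ := hv
    rw [← col_apply', ← mulVec_single_one, ← mul_vecMulVec]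
    exact Submodule.mul_mem_of_mem_op hM _
  | zero => simp
  | add x y _ _ hx hy => rw [add_vecMulVec]; exact I.add_mem (hx w) (hy w)
  | smul c x _ hx => rw [← op_unop c, ← vecMulVec_smul']; exact hx _

theorem colIdeal_colSpan (I : Submodule (Matrix (Fin n) (Fin n) D)ᵐᵒᵖ (Matrix (Fin n) (Fin n) D)) :
    colIdeal (colSpan I) = I := by
  refine le_antisymm (fun M hM => ?_) fun M hM j => Submodule.subset_span ⟨M, hM, j, rfl⟩
  rw [← sum_vecMulVec_col_single_one M]
  exact I.sum_mem fun j _ => vecMulVec_mem_of_mem_colSpan (hM j) _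

theorem exists_idempotent_generator_general
    {D : Type*} [DivisionRing D] {n : ℕ}
    (I : Submodule (Matrix (Fin n) (Fin n) D)ᵐᵒᵖ (Matrix (Fin n) (Fin n) D)) :
    ∃ φ ∈ I, φ * φ = φ ∧
      (I : Set (Matrix (Fin n) (Fin n) D)) = Set.range (fun M => φ * M) ∧
      colSpan I = Submodule.span Dᵐᵒᵖ (Set.range fun j : Fin n => fun i => φ i j) := by
  obtain ⟨W, hW⟩ := (colSpan I).exists_isCompl
  set p := (colSpan I).projection W hW
  set φ := p.toMulVecMatrix
  have hφ_mem : φ ∈ I := colIdeal_colSpan I ▸ fun j => Submodule.projection_apply_mem hW _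
  have hφ_mul : ∀ M ∈ I, φ * M = M := fun M hM => ext_col fun j => by
    rw [col_mul, p.toMulVecMatrix_mulVec]
    exact Submodule.projection_apply_of_mem_left hW (Submodule.subset_span ⟨M, hM, j, rfl⟩)
  refine ⟨φ, hφ_mem, hφ_mul φ hφ_mem, ?_, ?_⟩
  · ext M
    exact ⟨fun hM => ⟨M, hφ_mul M hM⟩,
      by rintro ⟨N, rfl⟩; exact Submodule.mul_mem_of_mem_op hφ_mem N⟩
  · rw [← Submodule.range_projection hW]
    exact p.span_range_apply_single_one.symm

/-- Every right ideal `I` of `M_n(D)` is generated by an idempotent `φ ∈ I`,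
and `V_I` is the image of `φ`, i.e. the right subspace spanned by the columns of `φ`. -/
theorem exists_idempotent_generator
    {D : Type*} [DivisionRing D] {n : ℕ} (hn : 1 ≤ n)
    (I : Submodule (Matrix (Fin n) (Fin n) D)ᵐᵒᵖ (Matrix (Fin n) (Fin n) D)) :
    ∃ φ ∈ I, φ * φ = φ ∧
      (I : Set (Matrix (Fin n) (Fin n) D)) = Set.range (fun M => φ * M) ∧
      colSpan I = Submodule.span Dᵐᵒᵖ (Set.range fun j : Fin n => fun i => φ i j) :=
  exists_idempotent_generator_general I
end

section
/- Let D be a division ring which is finite-dimensional as a ℚ-algebra, let F denote the center of D (a field), let n be a positive integer, and let σ be a ring automorphism of F. If there exists a ring automorphism Φ of M_n(D) such that Φ(x·1) = σ(x)·1 for every x ∈ F (where x·1 denotes the scalar matrix with the central element x on the diagonal), then there exists a ring automorphism θ of D such that θ(x) = σ(x) for every x ∈ F. -/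
/-!
Let `e = E₁₁`, so that the corner ring `e M_n(D) e` is `D`. The automorphism `Φ` carries it
onto the corner of the idempotent `f = Φ e`, which is therefore a division ring. A nonzero
idempotent matrix `f` dominates one of rank one, `C R` with `R C = 1`; as `C R` is a nonzero
idempotent of the corner of `f`, which has no zero divisors, `f = C R`, and then `M ↦ R M C` identifies the corner of `f` with `D`. The composite
`D ≅ e M_n(D) e ≅ f M_n(D) f ≅ D` is `θ`: for central `x` we have `Φ (x e) = σ(x) f`, hence
`θ x = σ(x) R f C = σ(x)`.
-/

lemma Subsemigroup.map_mem_corner {A B F : Type*} [Semigroup A] [Semigroup B] [FunLike F A B]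
    [MulHomClass F A B] {e r : A} (φ : F) (hr : r ∈ corner e) : φ r ∈ corner (φ e) := by
  obtain ⟨y, rfl⟩ := hr
  exact ⟨φ y, by simp only [map_mul]⟩

namespace IsIdempotentElem

def cornerCongr {A B : Type*} [NonUnitalSemiring A] [NonUnitalSemiring B] {e : A}
    (he : IsIdempotentElem e) (Φ : A ≃+* B) : he.Corner ≃+* (he.map Φ).Corner where
  toFun r := ⟨Φ r.1, Subsemigroup.map_mem_corner Φ r.2⟩
  invFun r := ⟨Φ.symm r.1, by simpa using Subsemigroup.map_mem_corner Φ.symm r.2⟩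
  left_inv r := Subtype.ext (Φ.symm_apply_apply r.1)
  right_inv r := Subtype.ext (Φ.apply_symm_apply r.1)
  map_mul' r s := Subtype.ext (map_mul Φ r.1 s.1)
  map_add' r s := Subtype.ext (map_add Φ r.1 s.1)

lemma eq_of_mem_corner {A : Type*} [Ring A] {f g : A} (hf : IsIdempotentElem f)
    [NoZeroDivisors hf.Corner] (hg : IsIdempotentElem g) (hg0 : g ≠ 0)
    (hg_mem : g ∈ Subsemigroup.corner f) : g = f := by
  let g' : hf.Corner := ⟨g, hg_mem⟩
  have hg' : IsIdempotentElem g' := Subtype.ext hg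
  have hg'0 : g' ≠ 0 := fun h => hg0 (congrArg Subtype.val h)
  exact congrArg Subtype.val ((iff_eq_zero_or_one.mp hg').resolve_left hg'0)

end IsIdempotentElem

namespace Matrix

section Single

variable {n α : Type*} [Fintype n] [DecidableEq n] [Semiring α]

lemma isIdempotentElem_single_one (i : n) : IsIdempotentElem (single i i (1 : α)) := by
  simp [IsIdempotentElem]

def cornerSingleRingEquiv (i : n) :
    (isIdempotentElem_single_one (α := α) i).Corner ≃+* α where
  toFun M := M.1 i i
  invFun a := ⟨single i i a, single i i a, by simp⟩
  left_inv := by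
    rintro ⟨_, y, rfl⟩
    exact Subtype.ext (by simp)
  right_inv a := by simp
  map_mul' := by
    rintro ⟨_, y, rfl⟩ ⟨_, z, rfl⟩
    show (single i i 1 * y * single i i 1 * (single i i 1 * z * single i i 1) : Matrix n n α) i i
      = _
    simp
  map_add' _ _ := rfl

end Single

section MulEqOne

variable {m k α : Type*} [Fintype m] [Fintype k] [DecidableEq k] [Semiring α]
  {C : Matrix m k α} {R : Matrix k m α}

def cornerRingEquivOfMulEqOne (hRC : R * C = 1) {f : Matrix m m α} (hf : IsIdempotentElem f)
    (hCR : C * R = f) : hf.Corner ≃+* Matrix k k α where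
  toFun M := R * M.1 * C
  invFun N := ⟨C * N * R, C * N * R, by
    subst hCR
    simp only [Matrix.mul_assoc]
    rw [← Matrix.mul_assoc R C, hRC, Matrix.one_mul, ← Matrix.mul_assoc R C, hRC,
      Matrix.one_mul]⟩
  left_inv M := by
    obtain ⟨hfM, hMf⟩ := (Subsemigroup.mem_corner_iff hf).mp M.2
    refine Subtype.ext ?_
    simp only [Matrix.mul_assoc, hCR, hMf]
    rw [← Matrix.mul_assoc, hCR, hfM]
  right_inv N := by
    simp only [Matrix.mul_assoc]
    rw [← Matrix.mul_assoc R C, hRC, Matrix.one_mul, Matrix.mul_one]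
  map_mul' M N := by
    obtain ⟨hfN, -⟩ := (Subsemigroup.mem_corner_iff hf).mp N.2
    show R * (M.1 * N.1) * C = R * M.1 * C * (R * N.1 * C)
    simp only [Matrix.mul_assoc]
    rw [← Matrix.mul_assoc C R, hCR, ← Matrix.mul_assoc f, hfN]
  map_add' M N := by
    show R * (M.1 + N.1) * C = R * M.1 * C + R * N.1 * C
    rw [Matrix.mul_add, Matrix.add_mul]

end MulEqOne

section DivisionRing

variable {m K : Type*} [Fintype m] [DecidableEq m] [DivisionRing K] {f : Matrix m m K}

/-- For an entry `f i j ≠ 0`, take `C` the `j`-th column of `f` and `R` the `i`-th row scaled by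
`(f i j)⁻¹`; then `R C = (f i j)⁻¹ (f * f) i j = 1`. -/
lemma exists_row_mul_col_eq_one (hf : IsIdempotentElem f) (hf0 : f ≠ 0) :
    ∃ (C : Matrix m Unit K) (R : Matrix Unit m K), R * C = 1 ∧ f * C = C ∧ R * f = R := by
  obtain ⟨i, j, hij⟩ : ∃ i j, f i j ≠ 0 := by
    by_contra! h
    exact hf0 (Matrix.ext h)
  refine ⟨f * single j () (1 : K), single () i (f i j)⁻¹ * f, ?_, ?_, ?_⟩
  · rw [Matrix.mul_assoc, ← Matrix.mul_assoc f, hf.eq, ← Matrix.mul_assoc,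
      single_mul_mul_single, mul_one, inv_mul_cancel₀ hij]
    ext ⟨⟩ ⟨⟩
    simp
  · rw [← Matrix.mul_assoc, hf.eq]
  · rw [Matrix.mul_assoc, hf.eq]

lemma exists_col_mul_row_eq_of_noZeroDivisors_corner (hf : IsIdempotentElem f)
    [NoZeroDivisors hf.Corner] (hf0 : f ≠ 0) :
    ∃ (C : Matrix m Unit K) (R : Matrix Unit m K), R * C = 1 ∧ C * R = f := by
  obtain ⟨C, R, hRC, hfC, hRf⟩ := exists_row_mul_col_eq_one hf hf0
  refine ⟨C, R, hRC, hf.eq_of_mem_corner ?_ ?_ ((Subsemigroup.mem_corner_iff hf).mpr ⟨?_, ?_⟩)⟩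
  · rw [IsIdempotentElem, Matrix.mul_assoc, ← Matrix.mul_assoc R, hRC, Matrix.one_mul]
  · intro hCR
    have : R * (C * R) * C = 1 := by rw [← Matrix.mul_assoc, hRC, Matrix.one_mul, hRC]
    rw [hCR, Matrix.mul_zero, Matrix.zero_mul] at this
    exact zero_ne_one this
  · rw [← Matrix.mul_assoc, hfC]
  · rw [Matrix.mul_assoc, hRf]

end DivisionRing

end Matrix

theorem lift_center_automorphism_to_divisionRing_general
    {D : Type*} [DivisionRing D]
    {n : ℕ} (hn : 1 ≤ n) (σ : Subring.center D ≃+* Subring.center D)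
    (hΦ : ∃ Φ : Matrix (Fin n) (Fin n) D ≃+* Matrix (Fin n) (Fin n) D,
      ∀ x : Subring.center D,
        Φ ((x : D) • (1 : Matrix (Fin n) (Fin n) D)) = (σ x : D) • (1 : Matrix (Fin n) (Fin n) D)) :
    ∃ θ : D ≃+* D, ∀ x : Subring.center D, θ (x : D) = (σ x : D) := by
  obtain ⟨Φ, hΦ⟩ := hΦ
  let z : Fin n := ⟨0, hn⟩
  have he := Matrix.isIdempotentElem_single_one (α := D) z
  have hf := he.map Φ
  have : NoZeroDivisors hf.Corner :=
    ((he.cornerCongr Φ).symm.trans (Matrix.cornerSingleRingEquiv z)).toMulEquiv.noZeroDivisors D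
  have hf0 : Φ (Matrix.single z z 1) ≠ 0 := by
    rw [map_ne_zero_iff _ Φ.injective]
    exact fun h => one_ne_zero (α := D) (by simpa using congr($h z z))
  obtain ⟨C, R, hRC, hCR⟩ := Matrix.exists_col_mul_row_eq_of_noZeroDivisors_corner hf hf0
  refine ⟨(Matrix.cornerSingleRingEquiv (α := D) z).symm.trans ((he.cornerCongr Φ).trans
    ((Matrix.cornerRingEquivOfMulEqOne hRC hf hCR).trans Matrix.uniqueRingEquiv)), fun x => ?_⟩
  change (R * Φ (Matrix.single z z (x : D)) * C) () () = σ x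
  have hx : Matrix.single z z (x : D) = ((x : D) • 1) * Matrix.single z z 1 := by
    rw [Matrix.smul_mul, Matrix.one_mul, Matrix.smul_single, smul_eq_mul, mul_one]
  rw [hx, map_mul, hΦ, Matrix.smul_mul, Matrix.one_mul, ← hCR]
  -- let the centre act on matrices, so that the scalar commutes with `R`
  change (R * (σ x • (C * R)) * C) () () = σ x
  rw [Matrix.mul_smul, Matrix.smul_mul, ← Matrix.mul_assoc, hRC, Matrix.one_mul, hRC]
  simp [Subring.smul_def]

/-- Let `D` be a division ring, finite-dimensional over `ℚ`, with centre `F`,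
and `σ` a ring automorphism of `F`.  If `σ` lifts to a ring automorphism of `M_n(D)` (acting on
scalar matrices with central entries as `σ` does), then `σ` lifts to a ring automorphism of `D`. -/
theorem lift_center_automorphism_to_divisionRing
    {D : Type*} [DivisionRing D] [CharZero D] [FiniteDimensional ℚ D]
    {n : ℕ} (hn : 1 ≤ n) (σ : Subring.center D ≃+* Subring.center D)
    (hΦ : ∃ Φ : Matrix (Fin n) (Fin n) D ≃+* Matrix (Fin n) (Fin n) D,
      ∀ x : Subring.center D,
        Φ ((x : D) • (1 : Matrix (Fin n) (Fin n) D)) = (σ x : D) • (1 : Matrix (Fin n) (Fin n) D)) :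
    ∃ θ : D ≃+* D, ∀ x : Subring.center D, θ (x : D) = (σ x : D) :=
  lift_center_automorphism_to_divisionRing_general hn σ hΦ
end

section
/- Let D be a division ring which is finite-dimensional as a ℚ-algebra, n a positive integer, and f a ring automorphism of M_n(D). Then there exist an invertible matrix P ∈ GL_n(D) and a ring automorphism σ of D such that f(M) = P · σ(M) · P⁻¹ for all M ∈ M_n(D), where σ(M) denotes the matrix obtained by applying σ to every entry of M. -/
open Matrix MulOpposite

/-!
The column space `V = Dⁿ` is the only simple `M_n(D)`-module, so `V` with the action twisted by `f`
is isomorphic to `V`: there is an additive bijection `T` with `T (N v) = f N (T v)`. The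
`M_n(D)`-linear endomorphisms of `V` are the right multiplications by scalars, so conjugating right
multiplication by `d` through `T` gives right multiplication by some `σ d`; this makes `σ` a ring
automorphism and `T` a `σ`-semilinear map. Hence `T v = P σ(v)` for the matrix `P` whose columns
are the `T eⱼ`, and the intertwining relation becomes `f M * P = P * σ(M)`.
-/

section

variable {D : Type*} [DivisionRing D] {m : Type*}

theorem eq_of_forall_op_smul_eq [Nonempty m] {a b : D} (h : ∀ w : m → D, op a • w = op b • w) :
    a = b := by
  obtain ⟨i⟩ := ‹Nonempty m›
  simpa using congrFun (h 1) i

variable [Fintype m]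

theorem AddEquiv.symm_mulVec_intertwines {f : Matrix m m D ≃+* Matrix m m D}
    {T : (m → D) ≃+ (m → D)} (hT : ∀ N v, T (N *ᵥ v) = f N *ᵥ T v) (N : Matrix m m D)
    (w : m → D) : T.symm (N *ᵥ w) = f.symm N *ᵥ T.symm w := by
  rw [AddEquiv.symm_apply_eq, hT, RingEquiv.apply_symm_apply, AddEquiv.apply_symm_apply]

theorem Matrix.map_mulVec_eq_comp_mulVec_symm (σ : D ≃+* D) (M : Matrix m m D) (w : m → D) :
    M.map σ *ᵥ w = σ ∘ (M *ᵥ (σ.symm ∘ w)) := by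
  ext i
  rw [Function.comp_apply, ← RingEquiv.coe_toRingHom, RingHom.map_mulVec]
  congr
  ext j
  simp

variable [DecidableEq m]

theorem Matrix.exists_mulVec_eq_of_ne_zero {l : Type*} {u : m → D} (hu : u ≠ 0) (w : l → D) :
    ∃ N : Matrix l m D, N *ᵥ u = w := by
  obtain ⟨k, hk⟩ := Function.ne_iff.mp hu
  refine ⟨vecMulVec w (Pi.single k (u k)⁻¹), ?_⟩
  rw [vecMulVec_mulVec, single_dotProduct, inv_mul_cancel₀ hk, op_one, one_smul]

theorem eq_op_smul_of_mulVec_comm {ρ : (m → D) → m → D}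
    (hρ : ∀ (N : Matrix m m D) w, ρ (N *ᵥ w) = N *ᵥ ρ w) (i : m) (v : m → D) :
    ρ v = op (ρ (Pi.single i 1) i) • v := by
  have hv : vecMulVec v (Pi.single i 1) *ᵥ Pi.single i 1 = v := by
    rw [vecMulVec_mulVec, single_one_dotProduct, Pi.single_eq_same, op_one, one_smul]
  rw [← hv, hρ, vecMulVec_mulVec, single_one_dotProduct, hv]

theorem bijective_of_mulVec_intertwines (f : Matrix m m D ≃+* Matrix m m D)
    (T : (m → D) →+ m → D) (hT : ∀ N v, T (N *ᵥ v) = f N *ᵥ T v) (hT0 : T ≠ 0) :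
    Function.Bijective T := by
  obtain ⟨u, hu⟩ := DFunLike.ne_iff.mp hT0
  refine ⟨(injective_iff_map_eq_zero T).mpr fun x hx => ?_, fun w => ?_⟩
  · by_contra hx0
    obtain ⟨N, rfl⟩ := exists_mulVec_eq_of_ne_zero hx0 u
    exact hu (by rw [hT, hx, mulVec_zero, AddMonoidHom.zero_apply])
  · obtain ⟨N, rfl⟩ := exists_mulVec_eq_of_ne_zero hu w
    exact ⟨f.symm N *ᵥ u, by rw [hT, RingEquiv.apply_symm_apply]⟩

theorem exists_addEquiv_mulVec_intertwines [Nonempty m] (f : Matrix m m D ≃+* Matrix m m D) :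
    ∃ T : (m → D) ≃+ (m → D), ∀ N v, T (N *ᵥ v) = f N *ᵥ T v := by
  obtain ⟨i⟩ := ‹Nonempty m›
  have hE : f (vecMulVec (Pi.single i 1) (Pi.single i 1)) ≠ 0 := by
    rw [map_ne_zero_iff _ f.injective]
    intro h
    simpa [vecMulVec_apply] using congrFun (congrFun h i) i
  obtain ⟨x, hx⟩ : ∃ x, f (vecMulVec (Pi.single i 1) (Pi.single i 1)) *ᵥ x ≠ 0 := by
    by_contra! h
    exact hE (mulVec_injective (funext fun x => by rw [h, zero_mulVec]))
  let T : (m → D) →+ m → D :=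
    AddMonoidHom.mk' (fun v => f (vecMulVec v (Pi.single i 1)) *ᵥ x) fun v w => by
      rw [add_vecMulVec, map_add, add_mulVec]
  have hT : ∀ N v, T (N *ᵥ v) = f N *ᵥ T v := fun N v => by
    simp only [T, AddMonoidHom.mk'_apply, ← mul_vecMulVec, map_mul, mulVec_mulVec]
  have hT0 : T ≠ 0 := DFunLike.ne_iff.mpr ⟨Pi.single i 1, hx⟩
  exact ⟨AddEquiv.ofBijective T (bijective_of_mulVec_intertwines f T hT hT0), hT⟩

theorem exists_ringHom_semilinear_of_mulVec_intertwines [Nonempty m]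
    {f : Matrix m m D ≃+* Matrix m m D} {T : (m → D) ≃+ (m → D)}
    (hT : ∀ N v, T (N *ᵥ v) = f N *ᵥ T v) :
    ∃ σ : D →+* D, ∀ d v, T (op d • v) = op (σ d) • T v := by
  obtain ⟨i⟩ := ‹Nonempty m›
  have hscalar : ∀ d : D, ∃ c, ∀ v, T (op d • v) = op c • T v := fun d => by
    have hρ := eq_op_smul_of_mulVec_comm (ρ := fun w => T (op d • T.symm w))
      (fun N w => by rw [T.symm_mulVec_intertwines hT, ← mulVec_smul, hT,
        RingEquiv.apply_symm_apply]) i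
    exact ⟨_, fun v => by simpa using hρ (T v)⟩
  have huniq : ∀ a b : D, (∀ v, op a • T v = op b • T v) → a = b := fun a b h =>
    eq_of_forall_op_smul_eq fun w => by simpa using h (T.symm w)
  choose σ hσ using hscalar
  refine ⟨{ toFun := σ, map_one' := ?_, map_mul' := ?_, map_zero' := ?_, map_add' := ?_ },
    hσ⟩
  · exact (huniq _ _ fun v => by rw [← hσ, op_one, one_smul, one_smul]).symm
  · exact fun d e => huniq _ _ fun v => by
      rw [← hσ, op_mul, mul_smul, hσ, hσ, op_mul, mul_smul]
  · exact (huniq _ _ fun v => by rw [← hσ, op_zero, zero_smul, zero_smul, map_zero]).symm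
  · exact fun d e => huniq _ _ fun v => by
      rw [← hσ, op_add, add_smul, map_add, hσ, hσ, op_add, add_smul]

theorem exists_ringEquiv_semilinear_of_mulVec_intertwines [Nonempty m]
    {f : Matrix m m D ≃+* Matrix m m D} {T : (m → D) ≃+ (m → D)}
    (hT : ∀ N v, T (N *ᵥ v) = f N *ᵥ T v) :
    ∃ σ : D ≃+* D, ∀ d v, T (op d • v) = op (σ d) • T v := by
  obtain ⟨σ, hσ⟩ := exists_ringHom_semilinear_of_mulVec_intertwines hT
  obtain ⟨τ, hτ⟩ := exists_ringHom_semilinear_of_mulVec_intertwines (f := f.symm)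
    (T.symm_mulVec_intertwines hT)
  have hστ : ∀ e, σ (τ e) = e := fun e => eq_of_forall_op_smul_eq fun w => by
    simpa [← hτ] using (hσ (τ e) (T.symm w)).symm
  have hτσ : ∀ d, τ (σ d) = d := fun d => eq_of_forall_op_smul_eq fun v => by
    simpa [← hσ] using (hτ (σ d) (T v)).symm
  exact ⟨RingEquiv.ofRingHom σ τ (RingHom.ext hστ) (RingHom.ext hτσ), hσ⟩

def columnsMatrix (T : (m → D) → m → D) : Matrix m m D :=
  Matrix.of fun i j => T (Pi.single j 1) i

theorem apply_eq_columnsMatrix_mulVec {F : Type*} [FunLike F (m → D) (m → D)]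
    [AddMonoidHomClass F (m → D) (m → D)] {T : F} {σ : D →+* D}
    (hσ : ∀ d v, T (op d • v) = op (σ d) • T v) (v : m → D) :
    T v = columnsMatrix T *ᵥ (σ ∘ v) := by
  have hsingle : ∀ j, Pi.single j (v j) = op (v j) • (Pi.single j 1 : m → D) := fun j => by
    rw [← Pi.single_smul, op_smul_eq_mul, one_mul]
  conv_lhs => rw [← Finset.univ_sum_single v]
  simp only [map_sum, hsingle, hσ, mulVec_eq_sum]
  rfl

theorem columnsMatrix_mulVec_eq_apply_symm {F : Type*} [FunLike F (m → D) (m → D)]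
    [AddMonoidHomClass F (m → D) (m → D)] {T : F} {σ : D ≃+* D}
    (hσ : ∀ d v, T (op d • v) = op (σ d) • T v) (w : m → D) :
    columnsMatrix T *ᵥ w = T (σ.symm ∘ w) := by
  rw [apply_eq_columnsMatrix_mulVec (σ := σ.toRingHom) hσ]
  congr
  ext j
  simp

theorem columnsMatrix_mul_map_columnsMatrix_symm {T : (m → D) ≃+ (m → D)} {σ : D ≃+* D}
    (hσ : ∀ d v, T (op d • v) = op (σ d) • T v) :
    columnsMatrix T * (columnsMatrix T.symm).map σ = 1 := by
  have hσ' : ∀ e w, T.symm (op e • w) = op (σ.symm e) • T.symm w := fun e w => by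
    rw [AddEquiv.symm_apply_eq, hσ, RingEquiv.apply_symm_apply, AddEquiv.apply_symm_apply]
  refine mulVec_injective (funext fun w => ?_)
  rw [← mulVec_mulVec, map_mulVec_eq_comp_mulVec_symm, columnsMatrix_mulVec_eq_apply_symm hσ,
    columnsMatrix_mulVec_eq_apply_symm hσ', one_mulVec]
  simp [Function.comp_def]

theorem mul_columnsMatrix_eq_columnsMatrix_mul_map {f : Matrix m m D ≃+* Matrix m m D}
    {T : (m → D) ≃+ (m → D)} (hT : ∀ N v, T (N *ᵥ v) = f N *ᵥ T v) {σ : D ≃+* D}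
    (hσ : ∀ d v, T (op d • v) = op (σ d) • T v) (M : Matrix m m D) :
    f M * columnsMatrix T = columnsMatrix T * M.map σ := by
  refine mulVec_injective (funext fun w => ?_)
  rw [← mulVec_mulVec, ← mulVec_mulVec, columnsMatrix_mulVec_eq_apply_symm hσ, ← hT,
    map_mulVec_eq_comp_mulVec_symm, columnsMatrix_mulVec_eq_apply_symm hσ]
  simp [Function.comp_def]

end

theorem ringAut_matrix_eq_conj_entrywise_general
    {D : Type*} [DivisionRing D]
    {n : ℕ} (hn : 1 ≤ n)
    (f : Matrix (Fin n) (Fin n) D ≃+* Matrix (Fin n) (Fin n) D) :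
    ∃ (P : (Matrix (Fin n) (Fin n) D)ˣ) (σ : D ≃+* D),
      ∀ M : Matrix (Fin n) (Fin n) D,
        f M = P.val * M.map ⇑σ * (P⁻¹).val := by
  have : Nonempty (Fin n) := ⟨⟨0, hn⟩⟩
  obtain ⟨T, hT⟩ := exists_addEquiv_mulVec_intertwines f
  obtain ⟨σ, hσ⟩ := exists_ringEquiv_semilinear_of_mulVec_intertwines hT
  -- `M_n(D)` is Dedekind-finite, so the right inverse `(columnsMatrix T.symm).map σ` is two-sided.
  refine ⟨.mkOfMulEqOne _ _ (columnsMatrix_mul_map_columnsMatrix_symm hσ), σ, fun M => ?_⟩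
  rw [Units.val_mkOfMulEqOne, ← mul_columnsMatrix_eq_columnsMatrix_mul_map hT hσ, mul_assoc]
  show f M = f M * (columnsMatrix T * (columnsMatrix T.symm).map σ)
  rw [columnsMatrix_mul_map_columnsMatrix_symm hσ, mul_one]

/-- Every ring automorphism `f` of `M_n(D)`, for a division ring `D`
finite-dimensional over `ℚ`, has the form `f(M) = P · σ(M) · P⁻¹` for some invertible matrix
`P` and some ring automorphism `σ` of `D` applied entrywise. -/
theorem ringAut_matrix_eq_conj_entrywise
    {D : Type*} [DivisionRing D] [CharZero D] [FiniteDimensional ℚ D]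
    {n : ℕ} (hn : 1 ≤ n)
    (f : Matrix (Fin n) (Fin n) D ≃+* Matrix (Fin n) (Fin n) D) :
    ∃ (P : (Matrix (Fin n) (Fin n) D)ˣ) (σ : D ≃+* D),
      ∀ M : Matrix (Fin n) (Fin n) D,
        f M = P.val * M.map ⇑σ * (P⁻¹).val :=
  ringAut_matrix_eq_conj_entrywise_general hn f
end

section
/- Let D be a division ring, n ≥ 2 an integer, k an integer with 1 ≤ k ≤ n−1, P ∈ GL_n(D) an invertible matrix, and σ a ring automorphism of D. Suppose that for every right D-subspace V of D^n of dimension k one has P·σ(V) = V, where σ(V) is the image of V under coordinatewise application of σ and P acts on D^n by matrix–vector multiplication on the left. Then there exists λ ∈ D× such that P is the scalar matrix λ·1 and σ(x) = λ⁻¹·x·λ for all x ∈ D; in particular σ fixes the center of D pointwise, and if σ is the identity then λ lies in the center of D. -/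
/-!
A line `⟨v⟩` of `D^n` is the intersection of the `k`-dimensional subspaces containing it
(`1 ≤ k < n`), so the σ-semilinear map `v ↦ P σ(v)` maps every line into itself. Applied to the
standard basis vectors this makes `P` diagonal, and applied to a vector with `i`-th coordinate
`1` and `j`-th coordinate `d` (`i ≠ j`) it gives `d P_ii = P_jj σ(d)`; with `d = 1` the diagonal
is constant, `P = λ • 1`, and then `σ(d) = λ⁻¹ d λ`.
-/

open Module Submodule Matrix

theorem Submodule.exists_finrank_eq_mem_notMem {K M : Type*} [DivisionRing K] [AddCommGroup M]
    [Module K M] {k : ℕ} (hk : 1 ≤ k) (hkM : k < finrank K M)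
    {v w : M} (hv : v ≠ 0) (hw : w ∉ K ∙ v) :
    ∃ V : Submodule K M, finrank K V = k ∧ v ∈ V ∧ w ∉ V := by
  have : Module.Finite K M := Module.finite_of_finrank_pos (by omega)
  induction k, hk using Nat.le_induction with
  | base => exact ⟨K ∙ v, finrank_span_singleton hv, mem_span_singleton_self v, hw⟩
  | succ k _ ih =>
    obtain ⟨V, hVk, hvV, hwV⟩ := ih (by omega)
    have hsup (y : M) : V ⊔ K ∙ y = span K (insert y V) := by
      rw [span_insert, span_eq, sup_comm]
    have hlt : finrank K ↥(V ⊔ K ∙ w) < finrank K M := by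
      have := finrank_add_le_finrank_add_finrank V (K ∙ w)
      have : finrank K (K ∙ w) ≤ 1 := by simpa using finrank_span_le_card (R := K) {w}
      omega
    obtain ⟨x, hx⟩ := (V ⊔ K ∙ w).exists_of_finrank_lt hlt
    have hxVw : x ∉ V ⊔ K ∙ w := by simpa using hx 1 one_ne_zero
    have hxV : x ∉ V := fun h => hxVw (mem_sup_left h)
    refine ⟨V ⊔ K ∙ x, by rw [finrank_sup_span_singleton hxV, hVk], mem_sup_left hvV, ?_⟩
    rw [hsup] at hxVw ⊢
    exact fun hwVx => hxVw (mem_span_insert_exchange hwVx (by rwa [span_eq]))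

theorem Submodule.mem_span_singleton_of_forall_finrank_eq_mapsTo {K M : Type*} [DivisionRing K]
    [AddCommGroup M] [Module K M] {k : ℕ} (hk : 1 ≤ k) (hkM : k < finrank K M) {T : M → M}
    (hT : ∀ V : Submodule K M, finrank K V = k → Set.MapsTo T V V) {v : M} (hv : v ≠ 0) :
    T v ∈ K ∙ v := by
  by_contra h
  obtain ⟨V, hVk, hvV, hTv⟩ := exists_finrank_eq_mem_notMem hk hkM hv h
  exact hTv (hT V hVk hvV)

theorem finrank_mulOpposite_fun {D ι : Type*} [DivisionRing D] [Fintype ι] :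
    finrank Dᵐᵒᵖ (ι → D) = Fintype.card ι :=
  (LinearEquiv.piCongrRight fun _ => MulOpposite.opLinearEquiv Dᵐᵒᵖ).finrank_eq.trans
    (finrank_fintype_fun_eq_card _)

theorem mul_eq_mul_map_of_forall_mul_map_eq_mul {D ι : Type*} [DivisionRing D] [DecidableEq ι]
    {a : ι → D} {σ : D →+* D}
    (ha : ∀ v : ι → D, v ≠ 0 → ∃ b : D, ∀ i, a i * σ (v i) = v i * b)
    {i j : ι} (hij : i ≠ j) (d : D) : d * a i = a j * σ d := by
  obtain ⟨b, hb⟩ := ha (Function.update 1 j d) fun h => by simpa [hij] using congrFun h i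
  have hi := hb i
  have hj := hb j
  simp only [Function.update_of_ne hij, Function.update_self, Pi.one_apply, map_one, mul_one,
    one_mul] at hi hj
  rw [hi, hj]

section LinePreserving

variable {D ι : Type*} [DivisionRing D] [Fintype ι] [DecidableEq ι]

theorem Matrix.exists_eq_diagonal_of_forall_mulVec_map_eq_mul {M : Matrix ι ι D} {σ : D →+* D}
    (hM : ∀ v : ι → D, v ≠ 0 → ∃ a : D, M *ᵥ (fun i => σ (v i)) = fun i => v i * a) :
    ∃ a : ι → D, M = diagonal a := by
  have hcol (j : ι) : ∃ a : D, ∀ i, M i j = if i = j then a else 0 := by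
    obtain ⟨a, ha⟩ := hM (Pi.single j 1) (by simp)
    have hσ : (fun i => σ ((Pi.single j 1 : ι → D) i)) = Pi.single j 1 := by
      ext i; by_cases h : i = j <;> simp [h]
    rw [hσ, mulVec_single_one] at ha
    exact ⟨a, fun i => by simpa [Pi.single_apply] using congrFun ha i⟩
  choose a ha using hcol
  refine ⟨a, Matrix.ext fun i j => ?_⟩
  rw [ha, diagonal_apply]
  split_ifs with h <;> simp [h]

theorem Matrix.exists_eq_smul_one_of_forall_mulVec_map_eq_mul [Nontrivial ι] {M : Matrix ι ι D}
    {σ : D →+* D}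
    (hM : ∀ v : ι → D, v ≠ 0 → ∃ a : D, M *ᵥ (fun i => σ (v i)) = fun i => v i * a) :
    ∃ lam : D, M = lam • 1 ∧ ∀ d, d * lam = lam * σ d := by
  obtain ⟨a, rfl⟩ := exists_eq_diagonal_of_forall_mulVec_map_eq_mul hM
  simp only [funext_iff, mulVec_diagonal] at hM
  obtain ⟨i, j, hij⟩ := exists_pair_ne ι
  have hconst (l : ι) : a l = a i := by
    rcases eq_or_ne i l with rfl | hil
    · rfl
    · simpa using (mul_eq_mul_map_of_forall_mul_map_eq_mul hM hil 1).symm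
  refine ⟨a i, ?_, fun d => ?_⟩
  · rw [smul_one_eq_diagonal]
    exact congrArg diagonal (funext hconst)
  · rw [mul_eq_mul_map_of_forall_mul_map_eq_mul hM hij d, hconst]

end LinePreserving

/-- If `P ∈ GL_n(D)` and a ring automorphism `σ` of `D` satisfy `P·σ(V) = V`
for all right subspaces `V` of `D^n` of a fixed dimension `k` with `1 ≤ k ≤ n-1`, then `P` is
a homothety `λ·1` and `σ` is conjugation by `λ`; in particular `σ` fixes the centre of `D`
pointwise, and if `σ = id` then `λ` is central. -/
theorem homothety_of_fixing_all_subspaces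
    {D : Type*} [DivisionRing D] {n k : ℕ} (hn : 2 ≤ n) (hk1 : 1 ≤ k) (hk2 : k ≤ n - 1)
    (P : (Matrix (Fin n) (Fin n) D)ˣ) (σ : D ≃+* D)
    (hfix : ∀ V : Submodule Dᵐᵒᵖ (Fin n → D), Module.finrank Dᵐᵒᵖ V = k →
      (fun v : Fin n → D => P.val.mulVec fun i => σ (v i)) '' (V : Set (Fin n → D)) = V) :
    ∃ lam : Dˣ,
      P.val = (lam : D) • (1 : Matrix (Fin n) (Fin n) D) ∧
      (∀ x : D, σ x = (lam : D)⁻¹ * x * (lam : D)) ∧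
      (∀ x ∈ Subring.center D, σ x = x) ∧
      (σ = RingEquiv.refl D → (lam : D) ∈ Subring.center D) := by
  have : Nontrivial (Fin n) := Fin.nontrivial_iff_two_le.mpr hn
  have hkn : k < finrank Dᵐᵒᵖ (Fin n → D) := by
    rw [finrank_mulOpposite_fun, Fintype.card_fin]; omega
  have hline (v : Fin n → D) (hv : v ≠ 0) :
      ∃ a : D, P.val *ᵥ (fun i => σ (v i)) = fun i => v i * a := by
    simpa [mem_span_singleton, funext_iff, eq_comm] using
      mem_span_singleton_of_forall_finrank_eq_mapsTo hk1 hkn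
        (fun V hV => Set.mapsTo_iff_image_subset.mpr (hfix V hV).subset) hv
  obtain ⟨lam, hP, hσ⟩ := P.val.exists_eq_smul_one_of_forall_mulVec_map_eq_mul (σ := σ) hline
  simp only [RingEquiv.coe_toRingHom] at hσ
  have hlam : lam ≠ 0 := by
    rintro rfl
    exact P.ne_zero (by rwa [zero_smul] at hP)
  have hconj (x : D) : σ x = lam⁻¹ * x * lam := by
    rw [mul_assoc, hσ, ← mul_assoc, inv_mul_cancel₀ hlam, one_mul]
  refine ⟨Units.mk0 lam hlam, hP, hconj, fun x hx => ?_, ?_⟩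
  · rw [hconj, Subring.mem_center_iff.mp hx, inv_mul_cancel_right₀ hlam]
  · rintro rfl
    exact Subring.mem_center_iff.mpr hσ
end

section
/- Let D be a division ring which is finite-dimensional as a ℚ-algebra, n ≥ 2 an integer, G a finite subgroup of the group of ring automorphisms of M_n(D), and k an integer with 1 ≤ k ≤ n−1. Then there are infinitely many right ideals I of M_n(D) such that the associated right subspace V_I of D^n has dimension k and such that g(I) ≠ I for every g ∈ G with g ≠ id; equivalently, the set of right D-subspaces V of D^n of dimension k such that g(I_V) ≠ I_V for all g ∈ G \ {id} is infinite. -/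
open MulOpposite

variable {D : Type*} [DivisionRing D] {n : ℕ}

/-!
Let `P` be the projection onto the first `k` coordinates of `D^n`. For every matrix `T` the
idempotent `E_T = graphProj P T = P + (1 - P) T P` projects along the last `n - k` coordinates
onto the graph of the lower-left block of `T`; its right ideal `E_T M_n(D)` has `V` of dimension
`k`, and distinct idempotents `E_T` give distinct ideals.

If an endomorphism `g` of `M_n(D)` stabilises all these ideals, then `g` fixes every `E_T`: the
`g(E_T)` are idempotents sharing a kernel, and if that kernel were not the one of `P`, a rank-one
choice of `T` would produce a graph meeting it. So `g` fixes `P` and the corner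
`(1 - P) M_n(D) P`, and since `M_n(D)` is simple, `g` is the identity.

For fixed `g`, stability of `E_T M_n(D)` is a system of quadratic equations in `T` over `ℚ`, so
the set of such `T` meets every line in finitely many points or contains it. For a finite group
of automorphisms these finitely many proper subsets miss a point, hence all but finitely many
points of a line through it along which `E_T` varies injectively.
-/

section SimpleRing

variable {R : Type*} [Ring R] [IsSimpleRing R] {a b : R}

theorem eq_zero_of_forall_mul_mul_eq_zero (ha : a ≠ 0) (h : ∀ x, a * x * b = 0) : b = 0 := by
  let I : TwoSidedIdeal R := .mk' {z | ∀ x, z * x * b = 0} (by simp)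
    (fun hz hw x => by rw [add_mul, add_mul, hz x, hw x, add_zero])
    (fun hz x => by rw [neg_mul, neg_mul, hz x, neg_zero])
    (fun {z w} hw x => by rw [mul_assoc z, mul_assoc z, hw, mul_zero])
    (fun {z w} hz x => by rw [mul_assoc z, hz])
  have h1 : (1 : R) ∈ I := IsSimpleRing.one_mem_of_ne_zero_mem I ha (by simpa [I] using h)
  simpa [I] using h1 1

theorem eq_zero_of_forall_mul_mul_eq_zero' (ha : a ≠ 0) (h : ∀ x, b * x * a = 0) : b = 0 :=
  op_injective <| eq_zero_of_forall_mul_mul_eq_zero (op_ne_zero_iff a |>.mpr ha) fun x => by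
    simpa [← mul_assoc] using congrArg op (h x.unop)

end SimpleRing

section GraphProj

variable {R : Type*} [Ring R] {P : R}

def graphProj (P T : R) : R := P + (1 - P) * T * P

/-- For idempotents this says `E * R = F * R` (Green's relation `ℛ`). -/
def GenSameRightIdeal (E F : R) : Prop := E * F = F ∧ F * E = E

@[simp] theorem graphProj_zero : graphProj P 0 = P := by simp [graphProj]

theorem graphProj_mul_self (hP : IsIdempotentElem P) (T : R) :
    graphProj P T * P = graphProj P T := by
  rw [graphProj, add_mul, hP.eq, mul_assoc _ P P, hP.eq]

theorem mul_graphProj_of_mul_eq {x : R} (hx : x * P = x) (T : R) : x * graphProj P T = x := by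
  rw [graphProj, mul_add, hx, ← mul_assoc, ← mul_assoc, mul_sub, mul_one, hx, sub_self, zero_mul,
    zero_mul, add_zero]

theorem graphProj_mul_graphProj (hP : IsIdempotentElem P) (T S : R) :
    graphProj P T * graphProj P S = graphProj P T :=
  mul_graphProj_of_mul_eq (graphProj_mul_self hP T) S

theorem IsIdempotentElem.graphProj (hP : IsIdempotentElem P) (T : R) :
    IsIdempotentElem (graphProj P T) :=
  graphProj_mul_graphProj hP T T

theorem mem_span_singleton_op_iff {E M : R} :
    M ∈ Submodule.span Rᵐᵒᵖ {E} ↔ ∃ N, E * N = M := by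
  simp only [Submodule.mem_span_singleton, MulOpposite.smul_eq_mul_unop]
  exact ⟨fun ⟨a, ha⟩ => ⟨a.unop, ha⟩, fun ⟨N, hN⟩ => ⟨op N, hN⟩⟩

theorem graphProj_eq_of_mem_span (hP : IsIdempotentElem P) {T S : R}
    (h : graphProj P S ∈ Submodule.span Rᵐᵒᵖ {graphProj P T}) :
    graphProj P S = graphProj P T := by
  obtain ⟨N, hN⟩ := mem_span_singleton_op_iff.mp h
  rw [← graphProj_mul_graphProj hP T S, ← hN, ← mul_assoc, (hP.graphProj T).eq]

theorem genSameRightIdeal_of_image_span_eq {F : Type*} [FunLike F R R] [RingHomClass F R R]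
    {E : R} (hE : IsIdempotentElem E) (f : F)
    (h : f '' (Submodule.span Rᵐᵒᵖ {E} : Set R) = Submodule.span Rᵐᵒᵖ {E}) :
    GenSameRightIdeal E (f E) := by
  have hEmem : E ∈ Submodule.span Rᵐᵒᵖ {E} := Submodule.mem_span_singleton_self E
  obtain ⟨N, hN⟩ := mem_span_singleton_op_iff.mp (h ▸ Set.mem_image_of_mem f hEmem :
    f E ∈ (Submodule.span Rᵐᵒᵖ {E} : Set R))
  obtain ⟨Y, hY, hfY⟩ := (h.symm ▸ hEmem : E ∈ f '' (Submodule.span Rᵐᵒᵖ {E} : Set R))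
  obtain ⟨M, rfl⟩ := mem_span_singleton_op_iff.mp hY
  rw [map_mul] at hfY
  refine ⟨by rw [← hN, ← mul_assoc, hE.eq], ?_⟩
  calc f E * E = f E * (f E * f M) := by rw [hfY]
    _ = E := by rw [← mul_assoc, ← map_mul, hE.eq, hfY]

end GraphProj

section Rigidity

variable {R : Type*} [Ring R] {P : R} {F : Type*} [FunLike F R R] [RingHomClass F R R]

theorem exists_corner_ne_zero_mul_mul_eq_self
    (hreg : ∀ y : R, y ≠ 0 → ∃ w ≠ 0, w * y * w = w) (hP : IsIdempotentElem P) {e : R}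
    (hPe : P * e = e) (he : e * (1 - P) ≠ 0) :
    ∃ v ≠ 0, (1 - P) * v * P = v ∧ v * e * v = v := by
  obtain ⟨w, hw0, hw⟩ := hreg _ he
  have hPe' : ∀ x, P * (e * x) = e * x := fun x => by rw [← mul_assoc, hPe]
  have hw' : ∀ x, w * (e * ((1 - P) * (w * x))) = w * x := fun x => by
    simpa only [mul_assoc] using congrArg (· * x) hw
  refine ⟨(1 - P) * w * P, fun h0 => hw0 ?_, ?_, by simp only [mul_assoc, hPe', hw']⟩
  · calc w = w * (e * ((1 - P) * (w * (e * ((1 - P) * w))))) := by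
          rw [hw']; simpa only [mul_assoc] using hw.symm
      _ = w * e * ((1 - P) * w * P) * e * (1 - P) * w := by simp only [mul_assoc, hPe']
      _ = 0 := by rw [h0, mul_zero, zero_mul, zero_mul, zero_mul]
  · rw [← mul_assoc, ← mul_assoc, hP.one_sub.eq, mul_assoc _ P P, hP.eq]

theorem map_mul_one_sub_eq_zero (hreg : ∀ y : R, y ≠ 0 → ∃ w ≠ 0, w * y * w = w)
    (hP : IsIdempotentElem P) (f : F)
    (h : ∀ T, GenSameRightIdeal (graphProj P T) (f (graphProj P T))) :
    f P * (1 - P) = 0 := by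
  have hPe : P * f P = f P := by simpa using (h 0).1
  by_contra hY
  obtain ⟨v, hv0, hvc, hvev⟩ := exists_corner_ne_zero_mul_mul_eq_self hreg hP hPe hY
  obtain ⟨Q, hQ⟩ : ∃ Q, Q = 1 - P := ⟨_, rfl⟩
  rw [← hQ] at hvc
  have hQv : Q * v = v := by rw [← hvc, ← mul_assoc, ← mul_assoc, hQ, hP.one_sub.eq]
  have hvP : v * P = v := by rw [← hvc, mul_assoc, hP.eq]
  have hPv : P * v = 0 := by rw [← hQv, ← mul_assoc, hQ, hP.mul_one_sub_self, zero_mul]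
  have hvv : v * v = 0 := by
    calc v * v = v * P * (Q * v) := by rw [hvP, hQv]
      _ = 0 := by rw [mul_assoc, ← mul_assoc P, hQ, hP.mul_one_sub_self, zero_mul, mul_zero]
  -- `v - f P * v` is killed by `f P` but fixed by `graphProj P (-v)`, whose image under `f` has
  -- the same kernel as `f P`; so it vanishes.
  have hz : f P * (v - f P * v) = 0 := by rw [mul_sub, ← mul_assoc, (hP.map f).eq, sub_self]
  have hfix : graphProj P (-v) * (v - f P * v) = v - f P * v := by
    have hE : graphProj P (-v) = P - v := by
      rw [graphProj, ← hQ, mul_neg, neg_mul, hQv, hvP, ← sub_eq_add_neg]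
    rw [hE, sub_mul, mul_sub, mul_sub, hPv, ← mul_assoc, hPe, hvv, ← mul_assoc, hvev]
    abel
  have hzero : v - f P * v = 0 := by
    have hfE : f (graphProj P (-v)) * f P = f (graphProj P (-v)) := by
      rw [← map_mul, graphProj_mul_self hP]
    calc v - f P * v = f (graphProj P (-v)) * graphProj P (-v) * (v - f P * v) := by
          rw [(h _).2, hfix]
      _ = 0 := by rw [mul_assoc, hfix, ← hfE, mul_assoc, hz, mul_zero]
  have hev : f P * v = v := (sub_eq_zero.mp hzero).symm
  exact hv0 (by rw [← hQv, ← hev, ← hPe, ← mul_assoc, ← mul_assoc, hQ, hP.one_sub_mul_self,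
    zero_mul, zero_mul])

theorem map_graphProj_eq (hreg : ∀ y : R, y ≠ 0 → ∃ w ≠ 0, w * y * w = w)
    (hP : IsIdempotentElem P) (f : F)
    (h : ∀ T, GenSameRightIdeal (graphProj P T) (f (graphProj P T))) (T : R) :
    f (graphProj P T) = graphProj P T := by
  have hfP : f P = P := by
    have h0 := (h 0).2
    rw [graphProj_zero] at h0
    rw [← mul_one (f P), ← sub_add_cancel 1 P, mul_add, map_mul_one_sub_eq_zero hreg hP f h,
      zero_add, h0]
  have hEP : f (graphProj P T) * P = f (graphProj P T) := by
    calc f (graphProj P T) * P = f (graphProj P T) * f P := by rw [hfP]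
      _ = f (graphProj P T) := by rw [← map_mul, graphProj_mul_self hP]
  calc f (graphProj P T) = f (graphProj P T) * graphProj P T :=
        (mul_graphProj_of_mul_eq hEP T).symm
    _ = graphProj P T := (h T).2

theorem map_eq_self_of_map_graphProj_eq [IsSimpleRing R] (hP : IsIdempotentElem P)
    (hP0 : P ≠ 0) (hP1 : P ≠ 1) (f : F) (h : ∀ T, f (graphProj P T) = graphProj P T) (x : R) :
    f x = x := by
  obtain ⟨Q, hQ⟩ : ∃ Q, Q = 1 - P := ⟨_, rfl⟩
  have hQ0 : Q ≠ 0 := hQ ▸ sub_ne_zero.mpr hP1.symm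
  have hfP : f P = P := by simpa using h 0
  have hlow : ∀ z, f (Q * z * P) = Q * z * P := fun z => by
    have := h z
    rwa [graphProj, ← hQ, map_add, hfP, add_right_inj] at this
  have hright : ∀ z, f (z * P) = z * P := by
    intro z
    have hcorner : f (P * z * P) = P * z * P := by
      have hPY : P * (f (P * z * P) - P * z * P) = f (P * z * P) - P * z * P := by
        have hPc : P * (P * z * P) = P * z * P := by rw [← mul_assoc, ← mul_assoc, hP.eq]
        rw [mul_sub, hPc, ← hfP, ← map_mul, hfP, hPc]
      refine sub_eq_zero.mp (hPY ▸ eq_zero_of_forall_mul_mul_eq_zero hQ0 fun u => ?_)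
      calc Q * u * (P * (f (P * z * P) - P * z * P))
          = f (Q * u * P) * f (P * z * P) - Q * u * P * (P * z * P) := by
            rw [hlow]; noncomm_ring
        _ = 0 := by
          rw [← map_mul, show Q * u * P * (P * z * P) = Q * (u * P * P * z) * P by
            simp only [mul_assoc], hlow, sub_self]
    rw [show z * P = P * z * P + Q * z * P by rw [hQ]; noncomm_ring, map_add, hcorner, hlow]
  have hYP : (f x - x) * P = 0 := by rw [sub_mul, ← hfP, ← map_mul, hfP, hright, sub_self]
  have hYQ : (f x - x) * Q = 0 := eq_zero_of_forall_mul_mul_eq_zero' hP0 fun u => by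
    calc (f x - x) * Q * u * P = f x * f (Q * u * P) - x * Q * u * P := by
          rw [hlow]; noncomm_ring
      _ = 0 := by rw [← map_mul, ← mul_assoc, ← mul_assoc, hright, sub_self]
  rw [← sub_eq_zero, ← mul_one (f x - x), show (1 : R) = P + Q by rw [hQ]; abel, mul_add, hYP,
    hYQ, add_zero]

theorem exists_not_genSameRightIdeal_graphProj [IsSimpleRing R]
    (hreg : ∀ y : R, y ≠ 0 → ∃ w ≠ 0, w * y * w = w) (hP : IsIdempotentElem P) (hP0 : P ≠ 0)
    (hP1 : P ≠ 1) {g : RingAut R} (hg : g ≠ 1) :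
    ∃ T, ¬ GenSameRightIdeal (graphProj P T) (g (graphProj P T)) := by
  by_contra! h
  exact hg <| RingEquiv.ext <|
    map_eq_self_of_map_graphProj_eq hP hP0 hP1 g (map_graphProj_eq hreg hP g h)

end Rigidity

section LineClosed

variable (K : Type*) {V : Type*} [Field K] [AddCommGroup V] [Module K V]

def IsLineClosed (Z : Set V) : Prop :=
  ∀ x y : V, {t : K | x + t • y ∈ Z}.Infinite → ∀ t : K, x + t • y ∈ Z

variable {K}

theorem IsLineClosed.finite_setOf_add_smul_mem {Z : Set V} (hZ : IsLineClosed K Z) {x y : V}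
    {t₀ : K} (ht₀ : x + t₀ • y ∉ Z) : {t : K | x + t • y ∈ Z}.Finite :=
  Set.not_infinite.mp fun h => ht₀ (hZ x y h t₀)

theorem IsLineClosed.inter {Z Z' : Set V} (hZ : IsLineClosed K Z) (hZ' : IsLineClosed K Z') :
    IsLineClosed K (Z ∩ Z') :=
  fun x y h t => ⟨hZ x y (h.mono fun _ hs => hs.1) t, hZ' x y (h.mono fun _ hs => hs.2) t⟩

open Polynomial in
theorem add_smul_add_sq_smul_eq_zero_of_infinite {u v w : V}
    (h : {t : K | u + t • v + t ^ 2 • w = 0}.Infinite) (t : K) : u + t • v + t ^ 2 • w = 0 := by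
  rw [← Module.forall_dual_apply_eq_zero_iff K]
  intro φ
  have hp : (C (φ u) + C (φ v) * X + C (φ w) * X ^ 2 : K[X]) = 0 := by
    refine Polynomial.eq_zero_of_infinite_isRoot _ (h.mono fun s hs => ?_)
    have := congrArg φ hs
    simp only [map_add, map_smul, smul_eq_mul, map_zero] at this
    simp only [Set.mem_ofPred_eq, IsRoot, eval_add, eval_mul, eval_C, eval_X, eval_pow]
    linear_combination this
  have := congrArg (eval t) hp
  simp only [eval_add, eval_mul, eval_C, eval_X, eval_pow, eval_zero] at this
  simp only [map_add, map_smul, smul_eq_mul]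
  linear_combination this

theorem AffineMap.map_add_smul {W : Type*} [AddCommGroup W] [Module K W] (α : V →ᵃ[K] W)
    (x y : V) (t : K) : α (x + t • y) = α x + t • α.linear y := by
  rw [add_comm x, ← vadd_eq_add, α.map_vadd, vadd_eq_add, LinearMap.map_smul, add_comm]

theorem isLineClosed_setOf_mul_eq {A : Type*} [Ring A] [Algebra K A] (α β γ : V →ᵃ[K] A) :
    IsLineClosed K {x | α x * β x = γ x} := by
  intro x y h t
  have key : ∀ s : K, α (x + s • y) * β (x + s • y) - γ (x + s • y) =
      (α x * β x - γ x) + s • (α x * β.linear y + α.linear y * β x - γ.linear y)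
        + s ^ 2 • (α.linear y * β.linear y) := fun s => by
    simp only [AffineMap.map_add_smul, add_mul, mul_add, smul_mul_assoc, mul_smul_comm]
    module
  have := add_smul_add_sq_smul_eq_zero_of_infinite
    (h.mono fun s (hs : _ = _) => by rw [Set.mem_ofPred_eq, ← key, hs, sub_self]) t
  exact sub_eq_zero.mp ((key t).trans this)

theorem exists_forall_notMem_of_isLineClosed [Infinite K] {ι : Type*} (s : Finset ι)
    {Z : ι → Set V} (hZ : ∀ i ∈ s, IsLineClosed K (Z i)) (hne : ∀ i ∈ s, ∃ x, x ∉ Z i) :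
    ∃ x, ∀ i ∈ s, x ∉ Z i := by
  classical
  induction s using Finset.induction_on with
  | empty => exact ⟨0, by simp⟩
  | insert a s ha ih =>
    obtain ⟨x, hx⟩ := ih (fun i hi => hZ i (Finset.mem_insert_of_mem hi))
      (fun i hi => hne i (Finset.mem_insert_of_mem hi))
    obtain ⟨x', hx'⟩ := hne a (Finset.mem_insert_self a s)
    have hfin : (⋃ i ∈ insert a s, {t : K | x + t • (x' - x) ∈ Z i}).Finite := by
      refine (Finset.finite_toSet _).biUnion fun i hi => ?_
      rcases Finset.mem_insert.mp hi with rfl | hi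
      · exact (hZ i hi).finite_setOf_add_smul_mem (t₀ := 1) (by simpa using hx')
      · exact (hZ i (Finset.mem_insert_of_mem hi)).finite_setOf_add_smul_mem (t₀ := 0)
          (by simpa using hx i hi)
    obtain ⟨t, ht⟩ := hfin.infinite_compl.nonempty
    exact ⟨x + t • (x' - x), fun i hi hmem => ht (Set.mem_biUnion hi hmem)⟩

end LineClosed

section Unstable

variable {R : Type*} [Ring R] {P : R}

def graphProjAffine (K : Type*) [CommRing K] [Algebra K R] (P : R) : R →ᵃ[K] R where
  toFun := graphProj P
  linear := LinearMap.mulLeft K (1 - P) ∘ₗ LinearMap.mulRight K P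
  map_vadd' T S := by
    simp only [graphProj, vadd_eq_add, LinearMap.coe_comp, Function.comp_apply,
      LinearMap.mulRight_apply, LinearMap.mulLeft_apply, mul_add, add_mul, mul_assoc]
    abel

theorem infinite_setOf_graphProj_forall_not_genSameRightIdeal [Algebra ℚ R] [IsSimpleRing R]
    (hreg : ∀ y : R, y ≠ 0 → ∃ w ≠ 0, w * y * w = w) (hP : IsIdempotentElem P) (hP0 : P ≠ 0)
    (hP1 : P ≠ 1) {S : Set (RingAut R)} (hS : S.Finite) (hS1 : 1 ∉ S) :
    {E | (∃ T, graphProj P T = E) ∧ ∀ g ∈ S, ¬ GenSameRightIdeal E (g E)}.Infinite := by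
  let α := graphProjAffine ℚ P
  let Z : RingAut R → Set R := fun g => {T | GenSameRightIdeal (α T) (g (α T))}
  have hZ (g : RingAut R) : IsLineClosed ℚ (Z g) := by
    let β := (g : R →+* R).toRatAlgHom.toLinearMap.toAffineMap.comp α
    exact (isLineClosed_setOf_mul_eq α β β).inter (isLineClosed_setOf_mul_eq β α α)
  obtain ⟨x, hx⟩ := exists_forall_notMem_of_isLineClosed hS.toFinset (fun g _ => hZ g)
    fun g hg => exists_not_genSameRightIdeal_graphProj hreg hP hP0 hP1
      (ne_of_mem_of_not_mem (hS.mem_toFinset.mp hg) hS1)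
  obtain ⟨y, hy⟩ : ∃ y, α.linear y ≠ 0 := by
    by_contra! h
    exact hP0 (eq_zero_of_forall_mul_mul_eq_zero (sub_ne_zero.mpr hP1.symm) fun y => by
      simpa [α, graphProjAffine, mul_assoc] using h y)
  have hbad : (⋃ g ∈ S, {t : ℚ | x + t • y ∈ Z g}).Finite :=
    hS.biUnion fun g hg => (hZ g).finite_setOf_add_smul_mem (t₀ := 0)
      (by simpa using hx g (hS.mem_toFinset.mpr hg))
  have hinj : Function.Injective fun t : ℚ => α (x + t • y) := fun t t' h => by
    simp only [AffineMap.map_add_smul, add_right_inj] at h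
    exact smul_left_injective ℚ hy h
  refine (hbad.infinite_compl.image hinj.injOn).mono ?_
  rintro _ ⟨t, ht, rfl⟩
  exact ⟨⟨_, rfl⟩, fun g hg hgs => ht (Set.mem_biUnion hg hgs)⟩

end Unstable

section Matrices

open Matrix

theorem Matrix.exists_ne_zero_mul_mul_eq_self {ι : Type*} [Fintype ι] [DecidableEq ι]
    {Y : Matrix ι ι D} (hY : Y ≠ 0) : ∃ W ≠ 0, W * Y * W = W := by
  obtain ⟨i, j, hij⟩ : ∃ i j, Y i j ≠ 0 := by
    by_contra! h
    exact hY (Matrix.ext h)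
  refine ⟨single j i (Y i j)⁻¹, fun h => ?_, ?_⟩
  · simpa [hij] using congrFun (congrFun h j) i
  · rw [single_mul_mul_single, inv_mul_cancel₀ hij, one_mul]

theorem colSpan_span_singleton (M : Matrix (Fin n) (Fin n) D) :
    colSpan (Submodule.span (Matrix (Fin n) (Fin n) D)ᵐᵒᵖ {M}) =
      Submodule.span Dᵐᵒᵖ (Set.range fun j i => M i j) := by
  apply le_antisymm
  · rw [colSpan, Submodule.span_le]
    rintro _ ⟨_, hN, j, rfl⟩
    obtain ⟨N, rfl⟩ := mem_span_singleton_op_iff.mp hN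
    have hcol : (fun i => (M * N) i j) = ∑ l, op (N l j) • fun i => M i l := by
      ext i
      simp [mul_apply, Finset.sum_apply, MulOpposite.smul_eq_mul_unop]
    rw [SetLike.mem_coe, hcol]
    exact Submodule.sum_mem _ fun l _ => Submodule.smul_mem _ _ (Submodule.subset_span ⟨l, rfl⟩)
  · rw [Submodule.span_le]
    rintro _ ⟨j, rfl⟩
    exact Submodule.subset_span ⟨M, Submodule.mem_span_singleton_self M, j, rfl⟩

def projFirst (k : ℕ) : Matrix (Fin n) (Fin n) D :=
  diagonal fun i => if (i : ℕ) < k then 1 else 0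

theorem isIdempotentElem_projFirst (k : ℕ) :
    IsIdempotentElem (projFirst k : Matrix (Fin n) (Fin n) D) := by
  simp [IsIdempotentElem, projFirst, diagonal_mul_diagonal]

theorem projFirst_ne_zero {k : ℕ} (hk : 0 < k) (hkn : k ≤ n) :
    (projFirst k : Matrix (Fin n) (Fin n) D) ≠ 0 := fun h => by
  simpa [projFirst, hk] using congrFun (congrFun h ⟨0, by omega⟩) ⟨0, by omega⟩

theorem projFirst_ne_one {k : ℕ} (hkn : k < n) :
    (projFirst k : Matrix (Fin n) (Fin n) D) ≠ 1 := fun h => by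
  simpa [projFirst] using congrFun (congrFun h ⟨k, hkn⟩) ⟨k, hkn⟩

theorem graphProj_projFirst_apply (k : ℕ) (T : Matrix (Fin n) (Fin n) D) (i j : Fin n) :
    graphProj (projFirst k) T i j =
      if (j : ℕ) < k then (if (i : ℕ) < k then (if i = j then 1 else 0) else T i j) else 0 := by
  have hQ : 1 - projFirst k =
      (diagonal fun i : Fin n => if (i : ℕ) < k then 0 else 1 : Matrix _ _ D) := by
    rw [← diagonal_one, projFirst, diagonal_sub]
    congr 1
    ext i
    split_ifs <;> simp
  rw [graphProj, hQ, projFirst, Matrix.add_apply, mul_diagonal, diagonal_mul, diagonal_apply]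
  split_ifs <;> simp_all

theorem finrank_colSpan_span_graphProj {k : ℕ} (hkn : k ≤ n) (T : Matrix (Fin n) (Fin n) D) :
    Module.finrank Dᵐᵒᵖ (colSpan
      (Submodule.span (Matrix (Fin n) (Fin n) D)ᵐᵒᵖ {graphProj (projFirst k) T})) = k := by
  set E := graphProj (projFirst k) T with hE
  set v : Fin k → Fin n → D := fun j i => E i (Fin.castLE hkn j)
  have hcols : Set.range (fun j i => E i j) ⊆ insert 0 (Set.range v) := by
    rintro _ ⟨j, rfl⟩
    by_cases hj : (j : ℕ) < k
    · exact Or.inr ⟨⟨j, hj⟩, rfl⟩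
    · exact Or.inl (funext fun i => by simp [hE, graphProj_projFirst_apply, hj])
  have hspan : Submodule.span Dᵐᵒᵖ (Set.range fun j i => E i j) =
      Submodule.span Dᵐᵒᵖ (Set.range v) :=
    le_antisymm ((Submodule.span_mono hcols).trans Submodule.span_insert_zero.le)
      (Submodule.span_mono (Set.range_subset_iff.mpr fun j => ⟨_, rfl⟩))
  have hli : LinearIndependent Dᵐᵒᵖ v := by
    rw [Fintype.linearIndependent_iff]
    intro a ha j
    simpa [v, hE, graphProj_projFirst_apply, Finset.sum_apply, MulOpposite.smul_eq_mul_unop]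
      using congrFun ha (Fin.castLE hkn j)
  rw [colSpan_span_singleton, hspan, finrank_span_eq_card hli, Fintype.card_fin]

end Matrices

theorem infinitely_many_unstable_ideals_general
    {D : Type*} [DivisionRing D] [CharZero D]
    {n : ℕ}
    (G : Subgroup (RingAut (Matrix (Fin n) (Fin n) D))) (hG : (G : Set (RingAut (Matrix (Fin n) (Fin n) D))).Finite)
    (k : ℕ) (hk1 : 1 ≤ k) (hk2 : k ≤ n - 1) :
    {I : Submodule (Matrix (Fin n) (Fin n) D)ᵐᵒᵖ (Matrix (Fin n) (Fin n) D) |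
      Module.finrank Dᵐᵒᵖ (colSpan I) = k ∧
      ∀ g ∈ G, g ≠ 1 →
        ⇑g '' (I : Set (Matrix (Fin n) (Fin n) D)) ≠ (I : Set (Matrix (Fin n) (Fin n) D))
      }.Infinite := by
  have hkn : k < n := by omega
  have : NeZero n := ⟨by omega⟩
  have hP := isIdempotentElem_projFirst (D := D) (n := n) k
  have key := infinite_setOf_graphProj_forall_not_genSameRightIdeal
    (fun _ => Matrix.exists_ne_zero_mul_mul_eq_self) hP (projFirst_ne_zero hk1 hkn.le)
    (projFirst_ne_one hkn) (hG.sdiff (t := {1})) (by simp)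
  refine (key.image (f := fun E => Submodule.span _ {E}) ?_).mono ?_
  · rintro _ ⟨⟨T, rfl⟩, -⟩ _ ⟨⟨S, rfl⟩, -⟩ (h : Submodule.span _ _ = Submodule.span _ _)
    exact (graphProj_eq_of_mem_span hP (h ▸ Submodule.mem_span_singleton_self _)).symm
  · rintro _ ⟨_, ⟨⟨T, rfl⟩, hT⟩, rfl⟩
    exact ⟨finrank_colSpan_span_graphProj hkn.le T, fun g hg hg1 himg =>
      hT g ⟨hg, hg1⟩ (genSameRightIdeal_of_image_span_eq (hP.graphProj T) g himg)⟩

/-- Let `D` be a division ring finite-dimensional over `ℚ`, `n ≥ 2`, `G` a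
finite subgroup of the automorphism group of `M_n(D)` and `1 ≤ k ≤ n-1`.  There are infinitely
many right ideals `I` of `M_n(D)` whose associated right subspace `V_I` has dimension `k` and
which are stable under no non-trivial element of `G`. -/
theorem infinitely_many_unstable_ideals
    {D : Type*} [DivisionRing D] [CharZero D] [FiniteDimensional ℚ D]
    {n : ℕ} (hn : 2 ≤ n)
    (G : Subgroup (RingAut (Matrix (Fin n) (Fin n) D))) (hG : (G : Set (RingAut (Matrix (Fin n) (Fin n) D))).Finite)
    (k : ℕ) (hk1 : 1 ≤ k) (hk2 : k ≤ n - 1) :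
    {I : Submodule (Matrix (Fin n) (Fin n) D)ᵐᵒᵖ (Matrix (Fin n) (Fin n) D) |
      Module.finrank Dᵐᵒᵖ (colSpan I) = k ∧
      ∀ g ∈ G, g ≠ 1 →
        ⇑g '' (I : Set (Matrix (Fin n) (Fin n) D)) ≠ (I : Set (Matrix (Fin n) (Fin n) D))
      }.Infinite :=
  infinitely_many_unstable_ideals_general G hG k hk1 hk2
end

section
/- Let r ≥ 1 be an integer and S₁, …, S_r be sets. For each i, let H_i be a subgroup of the group of bijections of S_i such that for every finite subgroup G_i of H_i the set {s ∈ S_i : λ(s) ≠ s for all λ ∈ G_i with λ ≠ id} is infinite. Let G be a finite subgroup of the group of bijections of the product ∏_{i=1}^r S_i such that for every g ∈ G there exist a permutation τ_g of {1, …, r} and bijections λ_{g,i} : S_{τ_g⁻¹(i)} → S_i with g(s₁, …, s_r) = (λ_{g,1}(s_{τ_g⁻¹(1)}), …, λ_{g,r}(s_{τ_g⁻¹(r)})) for all tuples, and such that λ_{g,i} ∈ H_i whenever τ_g(i) = i. Then the set F = {s ∈ ∏_{i=1}^r S_i : g(s) ≠ s for all g ∈ G with g ≠ id} is infinite. -/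
/-!
The permutations by which elements of `G` act on a single coordinate `i` form a finite subgroup
of `H i`: an element whose index permutation moves `i` cannot act on coordinate `i` alone, since
its `i`-th output is determined by another (non-trivial) coordinate. So the points of `S i` moved
by all of its non-trivial elements form an infinite set `D i`. Now choose `s` with `s i ∈ D i`
one coordinate at a time: each pair `(g, i)` with `τ_g i ≠ i` forbids at most one value of the
later-chosen of the coordinates `i`, `τ_g⁻¹ i`, so that `g s i ≠ s i`. A non-trivial `g` either
moves some index, and then moves `s`, or acts on every coordinate through a permutation, one of
which is non-trivial and moves `s i ∈ D i`. Shrinking each `D i` by finitely many points shows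
that there are infinitely many such `s`.
-/

open Function Equiv

section Greedy

variable {ι : Type*} {S : ι → Type*} [DecidableEq ι]

lemma subsingleton_setOf_update_apply_eq {i j k : ι} (hij : j ≠ i) (hk : i = k ∨ j = k)
    {e : S j → S i} (he : Injective e) (s : ∀ l, S l) :
    {v : S k | update s k v i = e (update s k v j)}.Subsingleton := by
  rintro v₁ h₁ v₂ h₂
  rcases hk with rfl | rfl
  · simp only [Set.mem_ofPred_eq, update_self, update_of_ne hij] at h₁ h₂
    rw [h₁, h₂]
  · simp only [Set.mem_ofPred_eq, update_self, update_of_ne hij.symm] at h₁ h₂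
    exact he (h₁.symm.trans h₂)

variable {κ : Type*} [Finite κ] {i j : κ → ι} {e : ∀ c, S (j c) → S (i c)}

lemma exists_pi_mem_forall_apply_ne_of_mem (hij : ∀ c, j c ≠ i c) (he : ∀ c, Injective (e c))
    {D : ∀ k, Set (S k)} (hD : ∀ k, (D k).Infinite) (T : Finset ι) :
    ∃ s : ∀ k, S k, (∀ k, s k ∈ D k) ∧
      ∀ c, i c ∈ T → j c ∈ T → s (i c) ≠ e c (s (j c)) := by
  induction T using Finset.induction_on with
  | empty => exact ⟨fun k => (hD k).nonempty.some, fun k => (hD k).nonempty.some_mem, by simp⟩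
  | insert k T _ ih =>
    obtain ⟨s, hsD, hs⟩ := ih
    have hbad : (⋃ c ∈ {c | i c = k ∨ j c = k},
        {v : S k | update s k v (i c) = e c (update s k v (j c))}).Finite :=
      Set.Finite.biUnion (Set.toFinite _) fun c hc =>
        (subsingleton_setOf_update_apply_eq (hij c) hc (he c) s).finite
    obtain ⟨v, hvD, hv⟩ := ((hD k).sdiff hbad).nonempty
    simp only [Set.mem_iUnion, Set.mem_ofPred_eq, not_exists] at hv
    refine ⟨update s k v, fun l => ?_, fun c hic hjc => ?_⟩
    · rcases eq_or_ne l k with rfl | hl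
      · rwa [update_self]
      · rw [update_of_ne hl]
        exact hsD l
    · by_cases hc : i c = k ∨ j c = k
      · exact hv c hc
      · push Not at hc
        rw [update_of_ne hc.1, update_of_ne hc.2]
        exact hs c (Finset.mem_of_mem_insert_of_ne hic hc.1)
          (Finset.mem_of_mem_insert_of_ne hjc hc.2)

lemma exists_pi_mem_forall_apply_ne [Fintype ι] (hij : ∀ c, j c ≠ i c)
    (he : ∀ c, Injective (e c)) {D : ∀ k, Set (S k)} (hD : ∀ k, (D k).Infinite) :
    ∃ s : ∀ k, S k, (∀ k, s k ∈ D k) ∧ ∀ c, s (i c) ≠ e c (s (j c)) := by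
  obtain ⟨s, hsD, hs⟩ := exists_pi_mem_forall_apply_ne_of_mem hij he hD Finset.univ
  exact ⟨s, hsD, fun c => hs c (Finset.mem_univ _) (Finset.mem_univ _)⟩

end Greedy

section Coordinates

variable {ι : Type*} {S : ι → Type*}

lemma eq_of_forall_apply_eval_eq [∀ k, Nonempty (S k)] {X : Type*} {i : ι} {f f' : S i → X}
    (h : ∀ s : ∀ k, S k, f (s i) = f' (s i)) : f = f' :=
  (surjective_eval i).injective_comp_right (funext h)

lemma subsingleton_of_forall_apply_eq [DecidableEq ι] [∀ k, Nonempty (S k)] {X : Type*}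
    {i j : ι} (hij : j ≠ i) {e : S j → X} (he : Injective e) {f : S i → X}
    (h : ∀ s : ∀ k, S k, e (s j) = f (s i)) : Subsingleton (S j) := by
  refine ⟨fun a b => he ?_⟩
  obtain ⟨s⟩ := (inferInstance : Nonempty (∀ k, S k))
  have ha := h (update s j a)
  have hb := h (update s j b)
  rw [update_self, update_of_ne hij.symm] at ha hb
  rw [ha, hb]

def coordinateActions (G : Subgroup (Perm (∀ k, S k))) (i : ι) : Subgroup (Perm (S i)) where
  carrier := {μ | ∃ g ∈ G, ∀ s, g s i = μ (s i)}
  one_mem' := ⟨1, G.one_mem, fun _ => rfl⟩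
  mul_mem' := by
    rintro μ ν ⟨g, hg, hgμ⟩ ⟨h, hh, hhν⟩
    exact ⟨g * h, G.mul_mem hg hh, fun s => by simp only [Perm.mul_apply, hgμ, hhν]⟩
  inv_mem' := by
    rintro μ ⟨g, hg, hgμ⟩
    refine ⟨g⁻¹, G.inv_mem hg, fun s => ?_⟩
    rw [Perm.eq_inv_iff_eq, ← hgμ]
    exact congrFun (g.apply_symm_apply s) i

lemma coordinateActions_finite [∀ k, Nonempty (S k)] {G : Subgroup (Perm (∀ k, S k))}
    (hG : (G : Set (Perm (∀ k, S k))).Finite) (i : ι) :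
    (coordinateActions G i : Set (Perm (S i))).Finite := by
  refine (hG.biUnion fun g _ => Set.Subsingleton.finite
    (s := {μ : Perm (S i) | ∀ s, g s i = μ (s i)}) ?_).subset ?_
  · exact fun μ hμ ν hν => DFunLike.coe_injective <|
      eq_of_forall_apply_eval_eq fun s => (hμ s).symm.trans (hν s)
  · rintro μ ⟨g, hg, hgμ⟩
    exact Set.mem_biUnion hg hgμ

end Coordinates

section PermutesCoordinates

variable {ι : Type*} {S : ι → Type*} {H : ∀ i, Subgroup (Perm (S i))}

def PermutesCoordinates (H : ∀ i, Subgroup (Perm (S i))) (g : Perm (∀ i, S i)) : Prop :=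
  ∃ τ : Perm ι, ∃ lam : ∀ i, S (τ.symm i) ≃ S i,
    (∀ s : ∀ i, S i, g s = fun i => lam i (s (τ.symm i))) ∧
    (∀ i, τ i = i → ∃ μ ∈ H i, ∀ s : ∀ j, S j, g s i = μ (s i))

lemma PermutesCoordinates.exists_mem_or_exists_ne {g : Perm (∀ i, S i)}
    (hg : PermutesCoordinates H g) (i : ι) :
    (∃ μ ∈ H i, ∀ s : ∀ k, S k, g s i = μ (s i)) ∨
      ∃ j ≠ i, ∃ e : S j ≃ S i, ∀ s : ∀ k, S k, g s i = e (s j) := by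
  obtain ⟨τ, lam, hlam, hfix⟩ := hg
  by_cases hτ : τ i = i
  · exact .inl (hfix i hτ)
  · exact .inr ⟨τ.symm i, fun h => hτ (τ.symm_apply_eq.mp h).symm, lam i,
      fun s => congrFun (hlam s) i⟩

variable [DecidableEq ι] [∀ k, Nontrivial (S k)] {G : Subgroup (Perm (∀ k, S k))}

lemma coordinateActions_le (hG : ∀ g ∈ G, PermutesCoordinates H g) (i : ι) :
    coordinateActions G i ≤ H i := by
  rintro μ ⟨g, hg, hgμ⟩
  rcases (hG g hg).exists_mem_or_exists_ne i with ⟨ν, hνH, hgν⟩ | ⟨j, hji, e, hge⟩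
  · rwa [DFunLike.coe_injective (eq_of_forall_apply_eval_eq fun s => (hgμ s).symm.trans (hgν s))]
  · have := subsingleton_of_forall_apply_eq hji e.injective fun s => (hge s).symm.trans (hgμ s)
    exact (not_subsingleton (S j) this).elim

end PermutesCoordinates

section FixedPointFree

variable {ι : Type*} [Fintype ι] [DecidableEq ι] {S : ι → Type*} {H : ∀ i, Subgroup (Perm (S i))}
  {G : Subgroup (Perm (∀ k, S k))}

theorem exists_pi_mem_forall_ne_one_apply_ne (hGfin : (G : Set (Perm (∀ k, S k))).Finite)
    (hG : ∀ g ∈ G, PermutesCoordinates H g) {D : ∀ i, Set (S i)} (hD : ∀ i, (D i).Infinite)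
    (hDfree : ∀ i, ∀ x ∈ D i, ∀ μ ∈ coordinateActions G i, μ ≠ 1 → μ x ≠ x) :
    ∃ s : ∀ i, S i, (∀ i, s i ∈ D i) ∧ ∀ g ∈ G, g ≠ 1 → g s ≠ s := by
  have := hGfin.to_subtype
  let κ := {p : G × ι // ∃ j ≠ p.2, ∃ e : S j ≃ S p.2, ∀ s : ∀ k, S k, p.1.1 s p.2 = e (s j)}
  choose j hj e he using fun c : κ => c.2
  obtain ⟨s, hsD, hs⟩ :=
    exists_pi_mem_forall_apply_ne (i := fun c => c.1.2) hj (fun c => (e c).injective) hD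
  refine ⟨s, hsD, fun g hg hg1 hgs => ?_⟩
  by_cases hmove : ∃ i, ∃ k ≠ i, ∃ e : S k ≃ S i, ∀ t : ∀ k, S k, g t i = e (t k)
  · obtain ⟨i, hi⟩ := hmove
    exact hs ⟨(⟨g, hg⟩, i), hi⟩ ((congrFun hgs i).symm.trans (he ⟨(⟨g, hg⟩, i), hi⟩ s))
  · have hact : ∀ i, ∃ μ ∈ H i, ∀ t : ∀ k, S k, g t i = μ (t i) := fun i =>
      ((hG g hg).exists_mem_or_exists_ne i).resolve_right fun h => hmove ⟨i, h⟩
    choose μ _ hμ using hact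
    obtain ⟨i, hi⟩ : ∃ i, μ i ≠ 1 := by
      by_contra! hμ1
      exact hg1 (Perm.ext fun t => funext fun i => by rw [hμ i t, hμ1 i]; rfl)
    exact hDfree i (s i) (hsD i) (μ i) ⟨g, hg, hμ i⟩ hi ((hμ i s).symm.trans (congrFun hgs i))

end FixedPointFree

/-- Combinatorial lemma: given sets `S 0, …, S (r-1)` and subgroups `H i` of
the permutation groups of the `S i` such that for every finite subgroup `G i ≤ H i` the set of
points moved by every non-trivial element of `G i` is infinite, any finite subgroup `G` of the
permutations of `∏ i, S i` whose elements act by permuting the coordinates (coordinates fixed by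
the index permutation being acted on by members of the corresponding `H i`) has an infinite set
of tuples moved by every non-trivial element of `G`. -/
theorem combinatorial_lemma
    {r : ℕ} (hr : 1 ≤ r) (S : Fin r → Type*)
    (H : ∀ i, Subgroup (Equiv.Perm (S i)))
    (hH : ∀ i, ∀ Gi : Subgroup (Equiv.Perm (S i)), Gi ≤ H i →
      (Gi : Set (Equiv.Perm (S i))).Finite →
      {s : S i | ∀ lam ∈ Gi, lam ≠ 1 → lam s ≠ s}.Infinite)
    (G : Subgroup (Equiv.Perm (∀ i, S i)))
    (hGfin : (G : Set (Equiv.Perm (∀ i, S i))).Finite)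
    (hG : ∀ g ∈ G, ∃ τ : Equiv.Perm (Fin r), ∃ lam : ∀ i, S (τ.symm i) ≃ S i,
      (∀ s : ∀ i, S i, g s = fun i => lam i (s (τ.symm i))) ∧
      (∀ i, τ i = i → ∃ μ ∈ H i, ∀ s : ∀ j, S j, g s i = μ (s i))) :
    {s : ∀ i, S i | ∀ g ∈ G, g ≠ 1 → g s ≠ s}.Infinite := by
  have hS : ∀ i, Infinite (S i) := fun i =>
    Set.infinite_univ_iff.mp ((hH i ⊥ bot_le (by simp)).mono (Set.subset_univ _))
  intro hfin
  obtain ⟨s, hsD, hs⟩ := exists_pi_mem_forall_ne_one_apply_ne hGfin hG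
    (D := fun i => {x | ∀ μ ∈ coordinateActions G i, μ ≠ 1 → μ x ≠ x} \ (fun s => s i) '' _)
    (fun i => (hH i _ (coordinateActions_le hG i) (coordinateActions_finite hGfin i)).sdiff
      (hfin.image _))
    (fun i x hx => hx.1)
  exact (hsD ⟨0, hr⟩).2 ⟨s, hs, rfl⟩
end
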